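/- For every real κ with 0 < κ < 1 and every real h ≥ 1, the 3×3 real symmetric matrix [[1, κ^2(h+2)/(2(h+1)), κ^2], [κ^2(h+2)/(2(h+1)), κ^2(2h+2)/(2(2h+1)), κ^2/2], [κ^2, κ^2/2, κ^2]] is positive semidefinite if and only if κ^2 ≤ G(h) := (2h^3+7h^2+8h+3)/(2h^3+7h^2+10h+4). -/

import Mathlib

/-- `G(h) = (2h³+7h²+8h+3)/(2h³+7h²+10h+4)`. -/
noncomputable def GCY (h : ℝ) : ℝ :=
  (2 * h ^ 3 + 7 * h ^ 2 + 8 * h + 3) / (2 * h ^ 3 + 7 * h ^ 2 + 10 * h + 4)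

/-!
Lagrange's reduction of a real ternary quadratic form with `a > 0` and `a d - b² > 0` writes
`a (a d - b²) Q` as two squares plus `a · det · z²`, so such a form is nonnegative exactly when
its determinant is. For the moment matrix with `t = κ²` the leading `2 × 2` minor is positive
because `t < 1`, and the determinant factors as
`t² / (4 (h+1)² (2h+1)) · ((2h³+7h²+8h+3) - t (2h³+7h²+10h+4))`.
-/

namespace Matrix

section

variable (a b c d e f : ℝ)

theorem isHermitian_symm_fin_three : (!![a, b, c; b, d, e; c, e, f]).IsHermitian := by
  rw [IsHermitian.ext_iff]
  intro i j
  fin_cases i <;> fin_cases j <;> simp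

theorem dotProduct_mulVec_symm_fin_three (x : Fin 3 → ℝ) :
    star x ⬝ᵥ (!![a, b, c; b, d, e; c, e, f] *ᵥ x) =
      a * x 0 ^ 2 + d * x 1 ^ 2 + f * x 2 ^ 2
        + 2 * b * x 0 * x 1 + 2 * c * x 0 * x 2 + 2 * e * x 1 * x 2 := by
  simp [mulVec, dotProduct, Fin.sum_univ_three]
  ring

theorem lagrange_reduction_fin_three (x y z : ℝ) :
    a * (a * d - b ^ 2) * (a * x ^ 2 + d * y ^ 2 + f * z ^ 2
        + 2 * b * x * y + 2 * c * x * z + 2 * e * y * z) =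
      (a * d - b ^ 2) * (a * x + b * y + c * z) ^ 2
        + ((a * d - b ^ 2) * y + (a * e - b * c) * z) ^ 2
        + a * (!![a, b, c; b, d, e; c, e, f]).det * z ^ 2 := by
  rw [det_fin_three]
  simp only [Fin.isValue, of_apply, cons_val', cons_val_zero, cons_val_fin_one, cons_val_one,
    cons_val]
  ring

end

theorem posSemidef_symm_fin_three_iff_det_nonneg {a b c d e f : ℝ} (ha : 0 < a)
    (hm : 0 < a * d - b ^ 2) :
    (!![a, b, c; b, d, e; c, e, f]).PosSemidef ↔ 0 ≤ (!![a, b, c; b, d, e; c, e, f]).det := by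
  rw [posSemidef_iff_dotProduct_mulVec]
  constructor
  · rintro ⟨-, hQ⟩
    set m := a * d - b ^ 2
    set n := a * e - b * c
    -- This vector kills both squares of the Lagrange reduction, leaving `a² m · det`.
    have hQw := hQ ![b * n - c * m, -(a * n), a * m]
    rw [dotProduct_mulVec_symm_fin_three] at hQw
    simp only [cons_val_zero, cons_val_one, cons_val_two, head_cons, tail_cons] at hQw
    have hreduction := lagrange_reduction_fin_three a b c d e f (b * n - c * m) (-(a * n)) (a * m)
    have hpos : 0 < a * m := mul_pos ha hm
    have : 0 ≤ a ^ 2 * m * (!![a, b, c; b, d, e; c, e, f]).det := by nlinarith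
    exact nonneg_of_mul_nonneg_right this (by positivity)
  · intro hdet
    refine ⟨isHermitian_symm_fin_three a b c d e f, fun x => ?_⟩
    rw [dotProduct_mulVec_symm_fin_three]
    have : 0 ≤ a * (a * d - b ^ 2) * (a * x 0 ^ 2 + d * x 1 ^ 2 + f * x 2 ^ 2
        + 2 * b * x 0 * x 1 + 2 * c * x 0 * x 2 + 2 * e * x 1 * x 2) := by
      rw [lagrange_reduction_fin_three]
      positivity
    exact nonneg_of_mul_nonneg_right this (mul_pos ha hm)

end Matrix

noncomputable def sixPointMomentMatrix (t h : ℝ) : Matrix (Fin 3) (Fin 3) ℝ :=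
  !![1, t * (h + 2) / (2 * (h + 1)), t;
     t * (h + 2) / (2 * (h + 1)), t * (2 * h + 2) / (2 * (2 * h + 1)), t / 2;
     t, t / 2, t]

section

variable {t h : ℝ}

theorem sixPointMomentMatrix_det (hh : 0 ≤ h) :
    (sixPointMomentMatrix t h).det = t ^ 2 / (4 * (h + 1) ^ 2 * (2 * h + 1)) *
      ((2 * h ^ 3 + 7 * h ^ 2 + 8 * h + 3) - t * (2 * h ^ 3 + 7 * h ^ 2 + 10 * h + 4)) := by
  have : h + 1 ≠ 0 := by positivity
  have : 2 * h + 1 ≠ 0 := by positivity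
  rw [sixPointMomentMatrix, Matrix.det_fin_three]
  simp only [Fin.isValue, Matrix.of_apply, Matrix.cons_val', Matrix.cons_val_zero,
    Matrix.cons_val_fin_one, Matrix.cons_val_one, one_mul, Matrix.cons_val]
  field_simp
  ring

theorem sixPointMomentMatrix_leadingMinor_pos (ht0 : 0 < t) (ht1 : t < 1) (hh : 0 ≤ h) :
    0 < 1 * (t * (2 * h + 2) / (2 * (2 * h + 1))) - (t * (h + 2) / (2 * (h + 1))) ^ 2 := by
  have hh1 : 0 < h + 1 := by positivity
  have hh2 : 0 < 2 * h + 1 := by positivity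
  have hnum : 0 < 4 * (h + 1) ^ 3 - t * (h + 2) ^ 2 * (2 * h + 1) := by
    have : 4 * (h + 1) ^ 3 - t * (h + 2) ^ 2 * (2 * h + 1) =
        h ^ 2 * (2 * h + 3) + (1 - t) * ((h + 2) ^ 2 * (2 * h + 1)) := by ring
    rw [this]
    exact add_pos_of_nonneg_of_pos (by positivity) (mul_pos (sub_pos.2 ht1) (by positivity))
  have : 1 * (t * (2 * h + 2) / (2 * (2 * h + 1))) - (t * (h + 2) / (2 * (h + 1))) ^ 2 =
      t / (4 * (h + 1) ^ 2 * (2 * h + 1)) * (4 * (h + 1) ^ 3 - t * (h + 2) ^ 2 * (2 * h + 1)) := by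
    field_simp
    ring
  rw [this]
  positivity

theorem sixPointMomentMatrix_posSemidef_iff (ht0 : 0 < t) (ht1 : t < 1) (hh : 0 ≤ h) :
    (sixPointMomentMatrix t h).PosSemidef ↔ t ≤ GCY h := by
  have hden : 0 < 2 * h ^ 3 + 7 * h ^ 2 + 10 * h + 4 := by positivity
  rw [sixPointMomentMatrix, Matrix.posSemidef_symm_fin_three_iff_det_nonneg one_pos
      (sixPointMomentMatrix_leadingMinor_pos ht0 ht1 hh), ← sixPointMomentMatrix,
    sixPointMomentMatrix_det hh, mul_nonneg_iff_of_pos_left (by positivity), sub_nonneg,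
    GCY, le_div_iff₀ hden]

end

theorem sixPointTest_matrix_posSemidef_iff (κ h : ℝ) (hκ0 : 0 < κ) (hκ1 : κ < 1)
    (hh : 1 ≤ h) :
    (Matrix.PosSemidef
      !![1, κ ^ 2 * (h + 2) / (2 * (h + 1)), κ ^ 2;
         κ ^ 2 * (h + 2) / (2 * (h + 1)), κ ^ 2 * (2 * h + 2) / (2 * (2 * h + 1)), κ ^ 2 / 2;
         κ ^ 2, κ ^ 2 / 2, κ ^ 2])
      ↔ κ ^ 2 ≤ GCY h :=
  sixPointMomentMatrix_posSemidef_iff (by positivity) (pow_lt_one₀ hκ0.le hκ1 two_ne_zero) (by linarith)
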